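/- arXiv:2403.14688 — 3 statements merged into one kernel-verified Lean document; each statement's English description precedes it below -/
import Mathlib

section
/- Let A⁺ be a d×d matrix with nonnegative entries, B a k×k matrix with nonnegative entries, and W, W' be d×k matrices with strictly positive entries. Then Tr(A⁺ W B W^T) = Σ_{i,j,m,n} A⁺_{ij} W_{jm} B_{mn} W_{in} ≥ Σ_{i,j,m,n} A⁺_{ij} W'_{jm} B_{mn} W'_{in} · (1 + log(W_{jm}W_{in}/(W'_{jm}W'_{in}))). -/
/-!
Expanding the trace gives the quadruple sum. For the bound, `log z ≤ z - 1` with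
`z = x / y` gives `y * (1 + log (x / y)) ≤ x`; applied with `x = W j m * W i n` and
`y = W' j m * W' i n` and multiplied by the nonnegative weight `A⁺ i j * B m n`,
it bounds the sums term by term.
-/

open Finset

theorem Matrix.trace_mul_mul_mul_transpose {ι κ α : Type*} [Fintype ι] [Fintype κ]
    [NonUnitalNonAssocSemiring α]
    (A : Matrix ι ι α) (W : Matrix ι κ α) (B : Matrix κ κ α) :
    (A * W * B * W.transpose).trace =
      ∑ i, ∑ j, ∑ m, ∑ n, A i j * W j m * B m n * W i n := by
  simp only [Matrix.trace, Matrix.diag, Matrix.mul_apply, Matrix.transpose_apply, sum_mul]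
  refine sum_congr rfl fun i _ => ?_
  rw [sum_comm]
  exact (sum_congr rfl fun _ _ => sum_comm).trans sum_comm

theorem Real.mul_one_add_log_div_le {x y : ℝ} (hx : 0 < x) (hy : 0 ≤ y) :
    y * (1 + Real.log (x / y)) ≤ x := by
  obtain rfl | hy := hy.eq_or_lt
  · simpa using hx.le
  calc y * (1 + Real.log (x / y)) ≤ y * (x / y) := by
        gcongr
        linarith [Real.log_le_sub_one_of_pos (div_pos hx hy)]
    _ = x := mul_div_cancel₀ x hy.ne'

theorem trace_AWBWt_log_bound (d k : ℕ)
    (Apos : Matrix (Fin d) (Fin d) ℝ) (B : Matrix (Fin k) (Fin k) ℝ)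
    (W W' : Matrix (Fin d) (Fin k) ℝ)
    (hA : ∀ i j, 0 ≤ Apos i j) (hB : ∀ m n, 0 ≤ B m n)
    (hW : ∀ i j, 0 < W i j) (hW' : ∀ i j, 0 < W' i j) :
    (Apos * W * B * W.transpose).trace
      = ∑ i, ∑ j, ∑ m, ∑ n, Apos i j * W j m * B m n * W i n ∧
    ∑ i, ∑ j, ∑ m, ∑ n, Apos i j * W' j m * B m n * W' i n *
        (1 + Real.log (W j m * W i n / (W' j m * W' i n)))
      ≤ ∑ i, ∑ j, ∑ m, ∑ n, Apos i j * W j m * B m n * W i n := by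
  refine ⟨Matrix.trace_mul_mul_mul_transpose Apos W B, ?_⟩
  refine sum_le_sum fun i _ => sum_le_sum fun j _ =>
    sum_le_sum fun m _ => sum_le_sum fun n _ => ?_
  have hterm := mul_le_mul_of_nonneg_left
    (Real.mul_one_add_log_div_le (mul_pos (hW j m) (hW i n))
      (mul_pos (hW' j m) (hW' i n)).le)
    (mul_nonneg (hA i j) (hB m n))
  linear_combination hterm
end

section
/- Let A be a symmetric d×d matrix with nonnegative entries, B a symmetric k×k matrix with nonnegative entries, and W, W' be d×k matrices with strictly positive entries. Then Tr(A W B W^T) ≤ Σ_{i=1}^d Σ_{j=1}^k (A W' B)_{ij} · W_{ij}² / W'_{ij}. -/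
/-!
With `K = B ⊗ₖ A`, which is symmetric and entrywise nonnegative, the trace is the quadratic
form `vec W ⬝ᵥ K *ᵥ vec W` and the right-hand side is `∑ₓ (K *ᵥ vec W')ₓ (vec W)ₓ² / (vec W')ₓ`.
For such `K` and positive `w`, AM-GM bounds each term `2 Kₓᵧ vₓ vᵧ` by
`Kₓᵧ (wᵧ vₓ² / wₓ + wₓ vᵧ² / wᵧ)`, and by symmetry of `K` both halves sum to
`∑ₓ (K *ᵥ w)ₓ vₓ² / wₓ`.
-/

open Matrix
open scoped Kronecker

theorem two_mul_mul_le_mul_sq_div_add_mul_sq_div {R : Type*} [Field R] [LinearOrder R]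
    [IsStrictOrderedRing R] (a b : R) {u v : R} (hu : 0 < u) (hv : 0 < v) :
    2 * (a * b) ≤ v * a ^ 2 / u + u * b ^ 2 / v := by
  have key : v * a ^ 2 / u + u * b ^ 2 / v - 2 * (a * b) = (v * a - u * b) ^ 2 / (u * v) := by
    field_simp
    ring
  have : 0 ≤ (v * a - u * b) ^ 2 / (u * v) := by positivity
  linarith

namespace Matrix

theorem IsSymm.kronecker {m n α : Type*} [Mul α] {A : Matrix m m α} {B : Matrix n n α}
    (hA : A.IsSymm) (hB : B.IsSymm) : (A ⊗ₖ B).IsSymm :=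
  IsSymm.ext fun _ _ => by simp only [kroneckerMap_apply, hA.apply, hB.apply]

variable {ι R : Type*} [Fintype ι] [Field R] [LinearOrder R] [IsStrictOrderedRing R]

theorem IsSymm.dotProduct_mulVec_le_sum_mulVec_mul_sq_div {K : Matrix ι ι R} (hK : K.IsSymm)
    (hK0 : ∀ x y, 0 ≤ K x y) (v w : ι → R) (hw : ∀ x, 0 < w x) :
    v ⬝ᵥ K *ᵥ v ≤ ∑ x, (K *ᵥ w) x * v x ^ 2 / w x := by
  set S := ∑ x, (K *ᵥ w) x * v x ^ 2 / w x
  have hS : S = ∑ x, ∑ y, K x y * w y * v x ^ 2 / w x := by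
    simp only [S, mulVec, dotProduct, Finset.sum_mul, Finset.sum_div]
  have hS' : S = ∑ x, ∑ y, K x y * w x * v y ^ 2 / w y := by
    rw [hS, Finset.sum_comm]
    simp only [hK.apply]
  have pointwise (x y : ι) : 2 * (v x * (K x y * v y))
      ≤ K x y * w y * v x ^ 2 / w x + K x y * w x * v y ^ 2 / w y := by
    have := mul_le_mul_of_nonneg_left
      (two_mul_mul_le_mul_sq_div_add_mul_sq_div (v x) (v y) (hw x) (hw y)) (hK0 x y)
    convert this using 1 <;> ring
  have h2 : 2 * (v ⬝ᵥ K *ᵥ v) ≤ 2 * S :=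
    calc 2 * (v ⬝ᵥ K *ᵥ v) = ∑ x, ∑ y, 2 * (v x * (K x y * v y)) := by
          simp only [dotProduct, mulVec, Finset.mul_sum]
      _ ≤ ∑ x, ∑ y, (K x y * w y * v x ^ 2 / w x + K x y * w x * v y ^ 2 / w y) := by
          gcongr with x _ y _
          exact pointwise x y
      _ = 2 * S := by
          rw [two_mul]
          nth_rw 1 [hS]
          rw [hS']
          simp only [Finset.sum_add_distrib]
  linarith

end Matrix

theorem ding_prop6_general (d k : ℕ)
    (A : Matrix (Fin d) (Fin d) ℝ) (B : Matrix (Fin k) (Fin k) ℝ)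
    (hAsymm : A.transpose = A) (hBsymm : B.transpose = B)
    (hA : ∀ i j, 0 ≤ A i j) (hB : ∀ m n, 0 ≤ B m n)
    (W W' : Matrix (Fin d) (Fin k) ℝ)
    (hW' : ∀ i j, 0 < W' i j) :
    (A * W * B * W.transpose).trace
      ≤ ∑ i, ∑ j, (A * W' * B) i j * (W i j) ^ 2 / W' i j := by
  have hK : (B ⊗ₖ A).IsSymm := IsSymm.kronecker hBsymm hAsymm
  have hK0 : ∀ x y, 0 ≤ (B ⊗ₖ A) x y := fun _ _ => mul_nonneg (hB _ _) (hA _ _)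
  have hmulVec (X : Matrix (Fin d) (Fin k) ℝ) : (B ⊗ₖ A) *ᵥ vec X = vec (A * X * B) := by
    rw [kronecker_mulVec_vec, hBsymm]
  have hquad := hK.dotProduct_mulVec_le_sum_mulVec_mul_sq_div hK0 (vec W) (vec W')
    fun _ => hW' _ _
  rw [hmulVec, hmulVec, vec_dotProduct_vec, trace_mul_comm, Fintype.sum_prod_type,
    Finset.sum_comm] at hquad
  exact hquad

theorem ding_prop6 (d k : ℕ)
    (A : Matrix (Fin d) (Fin d) ℝ) (B : Matrix (Fin k) (Fin k) ℝ)
    (hAsymm : A.transpose = A) (hBsymm : B.transpose = B)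
    (hA : ∀ i j, 0 ≤ A i j) (hB : ∀ m n, 0 ≤ B m n)
    (W W' : Matrix (Fin d) (Fin k) ℝ)
    (hW : ∀ i j, 0 < W i j) (hW' : ∀ i j, 0 < W' i j) :
    (A * W * B * W.transpose).trace
      ≤ ∑ i, ∑ j, (A * W' * B) i j * (W i j) ^ 2 / W' i j :=
  ding_prop6_general d k A B hAsymm hBsymm hA hB W W' hW'
end

section
/- With the same definitions, G(W, W') ≥ J(W) for all strictly positive W, W'; i.e., G is an auxiliary function for J (upper-bounding it and matching at W' = W), which implies that updating W ← argmin_W G(W, W') yields a non-increasing sequence J(W^{(t+1)}) ≤ G(W^{(t+1)}, W^{(t)}) ≤ G(W^{(t)}, W^{(t)}) = J(W^{(t)}). -/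
/-!
Each of the four terms of `J` is bounded by the corresponding term of `G`. The two traces entering
`J` with a minus sign are bounded below through `1 + log t ≤ t`. The two entering with a plus sign
are quadratic forms `∑ K_pq x_p x_q` in `x = vec W`, with a nonnegative symmetric kernel
(`K = B ⊗ A⁻`, resp. the identity tensor the all-ones matrix), and are bounded above termwise by
`x_p x_q ≤ (v_q x_p² / v_p + v_p x_q² / v_q) / 2` with `v = vec W'`; by symmetry of `K`, both
halves sum to `∑_p (K v)_p x_p² / v_p`.
-/

noncomputable def KAUFS_J (d k : ℕ) (Apos Aneg : Matrix (Fin d) (Fin d) ℝ)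
    (B : Matrix (Fin k) (Fin k) ℝ) (α : ℝ) (W : Matrix (Fin d) (Fin k) ℝ) : ℝ :=
  -(1/2) * (Apos * W * B * W.transpose).trace
    + (1/2) * (Aneg * W * B * W.transpose).trace
    + (α/2) * ((Matrix.of fun _ _ => (1 : ℝ) : Matrix (Fin d) (Fin d) ℝ) * W * W.transpose).trace
    - (α/2) * (W * W.transpose).trace

noncomputable def KAUFS_G (d k : ℕ) (Apos Aneg : Matrix (Fin d) (Fin d) ℝ)
    (B : Matrix (Fin k) (Fin k) ℝ) (α : ℝ)
    (W W' : Matrix (Fin d) (Fin k) ℝ) : ℝ :=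
  -(1/2) * ∑ i, ∑ j, ∑ m, ∑ n, Apos i j * W' j m * B m n * W' i n *
      (1 + Real.log (W j m * W i n / (W' j m * W' i n)))
    + (1/2) * ∑ i, ∑ j, (Aneg * W' * B) i j * (W i j) ^ 2 / W' i j
    + (α/2) * ∑ i, ∑ j, (((Matrix.of fun _ _ => (1 : ℝ) : Matrix (Fin d) (Fin d) ℝ)) * W') i j * (W i j) ^ 2 / W' i j
    - (α/2) * ∑ i, ∑ j, (W' i j) ^ 2 * (1 + Real.log ((W i j) ^ 2 / (W' i j) ^ 2))

open Finset Matrix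
open scoped Kronecker

theorem mul_one_add_log_div_le {a b : ℝ} (ha : 0 < a) (hb : 0 < b) :
    a * (1 + Real.log (b / a)) ≤ b := by
  have := Real.log_le_sub_one_of_pos (div_pos hb ha)
  calc a * (1 + Real.log (b / a)) ≤ a * (b / a) := by gcongr; linarith
    _ = b := mul_div_cancel₀ b ha.ne'

theorem two_mul_mul_le_div_add_div {a b : ℝ} (ha : 0 < a) (hb : 0 < b) (x y : ℝ) :
    2 * x * y ≤ b * x ^ 2 / a + a * y ^ 2 / b := by
  rw [div_add_div _ _ ha.ne' hb.ne', le_div_iff₀ (mul_pos ha hb)]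
  nlinarith [sq_nonneg (b * x - a * y)]

theorem Matrix.dotProduct_mulVec_le_sum_mulVec_mul_sq_div {τ : Type*} [Fintype τ]
    {K : Matrix τ τ ℝ} (hK : ∀ p q, 0 ≤ K p q) (hKsymm : K.IsSymm) (x : τ → ℝ) {v : τ → ℝ}
    (hv : ∀ p, 0 < v p) :
    x ⬝ᵥ K *ᵥ x ≤ ∑ p, (K *ᵥ v) p * x p ^ 2 / v p := by
  set R : τ → τ → ℝ := fun p q => K p q * v q * x p ^ 2 / v p
  calc x ⬝ᵥ K *ᵥ x = ∑ p, ∑ q, x p * K p q * x q := by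
        simp only [dotProduct, mulVec, mul_sum, mul_assoc]
    _ ≤ ∑ p, ∑ q, (R p q + R q p) / 2 := by
        refine sum_le_sum fun p _ => sum_le_sum fun q _ => ?_
        calc x p * K p q * x q = K p q * (2 * x p * x q) / 2 := by ring
          _ ≤ K p q * (v q * x p ^ 2 / v p + v p * x q ^ 2 / v q) / 2 := by
              gcongr
              · exact hK p q
              · exact two_mul_mul_le_div_add_div (hv p) (hv q) _ _
          _ = (R p q + R q p) / 2 := by simp only [R, hKsymm.apply p q]; ring
    _ = ∑ p, ∑ q, R p q := by
        simp only [← sum_div, sum_add_distrib]; rw [sum_comm (f := fun p q => R q p)]; ring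
    _ = ∑ p, (K *ᵥ v) p * x p ^ 2 / v p := by
        simp only [R, mulVec, dotProduct, sum_mul, sum_div]

theorem Matrix.trace_mul_mul_mul_transpose_le {ι κ : Type*} [Fintype ι] [Fintype κ]
    {S : Matrix ι ι ℝ} {B : Matrix κ κ ℝ} (hS : ∀ i j, 0 ≤ S i j) (hSsymm : S.IsSymm)
    (hB : ∀ m n, 0 ≤ B m n) (hBsymm : B.IsSymm) (W : Matrix ι κ ℝ) {W' : Matrix ι κ ℝ}
    (hW' : ∀ i j, 0 < W' i j) :
    (S * W * B * Wᵀ).trace ≤ ∑ i, ∑ j, (S * W' * B) i j * W i j ^ 2 / W' i j := by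
  have hK : (B ⊗ₖ S).IsSymm := by
    rw [IsSymm, ← kroneckerMap_transpose, hBsymm, hSsymm]
  have hvec : ∀ X : Matrix ι κ ℝ, (B ⊗ₖ S) *ᵥ vec X = vec (S * X * B) := fun X => by
    rw [kronecker_mulVec_vec, hBsymm]
  calc (S * W * B * Wᵀ).trace = vec W ⬝ᵥ (B ⊗ₖ S) *ᵥ vec W := by
        rw [hvec, vec_dotProduct_vec, trace_mul_comm]
    _ ≤ ∑ p, ((B ⊗ₖ S) *ᵥ vec W') p * vec W p ^ 2 / vec W' p :=
        dotProduct_mulVec_le_sum_mulVec_mul_sq_div (fun _ _ => mul_nonneg (hB _ _) (hS _ _)) hK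
          _ (fun p => hW' p.2 p.1)
    _ = ∑ i, ∑ j, (S * W' * B) i j * W i j ^ 2 / W' i j := by
        rw [hvec, Fintype.sum_prod_type, sum_comm]
        rfl

theorem Matrix.trace_mul_mul_mul_transpose_eq_sum {ι κ : Type*} [Fintype ι] [Fintype κ]
    (S : Matrix ι ι ℝ) (B : Matrix κ κ ℝ) (W : Matrix ι κ ℝ) :
    (S * W * B * Wᵀ).trace = ∑ i, ∑ j, ∑ m, ∑ n, S i j * W j m * B m n * W i n := by
  simp only [trace, diag, mul_apply, transpose_apply, sum_mul]
  refine sum_congr rfl fun i _ => ?_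
  rw [sum_comm]
  exact (sum_congr rfl fun m _ => sum_comm).trans sum_comm

theorem Matrix.sum_mul_one_add_log_le_trace {ι κ : Type*} [Fintype ι] [Fintype κ]
    {S : Matrix ι ι ℝ} {B : Matrix κ κ ℝ} (hS : ∀ i j, 0 ≤ S i j) (hB : ∀ m n, 0 ≤ B m n)
    {W W' : Matrix ι κ ℝ} (hW : ∀ i j, 0 < W i j) (hW' : ∀ i j, 0 < W' i j) :
    ∑ i, ∑ j, ∑ m, ∑ n, S i j * W' j m * B m n * W' i n *
        (1 + Real.log (W j m * W i n / (W' j m * W' i n)))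
      ≤ (S * W * B * Wᵀ).trace := by
  rw [trace_mul_mul_mul_transpose_eq_sum]
  refine sum_le_sum fun i _ => sum_le_sum fun j _ => sum_le_sum fun m _ => sum_le_sum fun n _ => ?_
  calc S i j * W' j m * B m n * W' i n * (1 + Real.log (W j m * W i n / (W' j m * W' i n)))
      = S i j * B m n * (W' j m * W' i n *
          (1 + Real.log (W j m * W i n / (W' j m * W' i n)))) := by ring
    _ ≤ S i j * B m n * (W j m * W i n) :=
        mul_le_mul_of_nonneg_left
          (mul_one_add_log_div_le (mul_pos (hW' j m) (hW' i n)) (mul_pos (hW j m) (hW i n)))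
          (mul_nonneg (hS i j) (hB m n))
    _ = S i j * W j m * B m n * W i n := by ring

theorem Matrix.sum_sq_mul_one_add_log_le_trace {ι κ : Type*} [Fintype ι] [Fintype κ]
    {W W' : Matrix ι κ ℝ} (hW : ∀ i j, 0 < W i j) (hW' : ∀ i j, 0 < W' i j) :
    ∑ i, ∑ j, W' i j ^ 2 * (1 + Real.log (W i j ^ 2 / W' i j ^ 2)) ≤ (W * Wᵀ).trace := by
  have htrace : (W * Wᵀ).trace = ∑ i, ∑ j, W i j ^ 2 := by
    simp [trace, mul_apply, sq]
  rw [htrace]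
  exact sum_le_sum fun i _ => sum_le_sum fun j _ =>
    mul_one_add_log_div_le (pow_pos (hW' i j) 2) (pow_pos (hW i j) 2)

theorem KAUFS_G_auxiliary_general (d k : ℕ) (Apos Aneg : Matrix (Fin d) (Fin d) ℝ)
    (B : Matrix (Fin k) (Fin k) ℝ) (α : ℝ)
    (hApos : ∀ i j, 0 ≤ Apos i j) (hAneg : ∀ i j, 0 ≤ Aneg i j)
    (hAnegSymm : Aneg.transpose = Aneg)
    (hB : ∀ m n, 0 ≤ B m n) (hBsymm : B.transpose = B) (hα : 0 ≤ α)
    (W W' : Matrix (Fin d) (Fin k) ℝ)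
    (hW : ∀ i j, 0 < W i j) (hW' : ∀ i j, 0 < W' i j) :
    KAUFS_J d k Apos Aneg B α W ≤ KAUFS_G d k Apos Aneg B α W W' := by
  set E : Matrix (Fin d) (Fin d) ℝ := of fun _ _ => 1
  have hApos_term := sum_mul_one_add_log_le_trace hApos hB hW hW'
  have hAneg_term := trace_mul_mul_mul_transpose_le hAneg hAnegSymm hB hBsymm W hW'
  have hE_term : (E * W * Wᵀ).trace ≤ ∑ i, ∑ j, (E * W') i j * W i j ^ 2 / W' i j := by
    simpa only [Matrix.mul_one] using trace_mul_mul_mul_transpose_le (S := E) (B := 1)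
      (fun _ _ => zero_le_one) (IsSymm.ext fun _ _ => rfl)
      (fun _ _ => ite_nonneg zero_le_one le_rfl) isSymm_one W hW'
  have hI_term := sum_sq_mul_one_add_log_le_trace hW hW'
  unfold KAUFS_J KAUFS_G
  linarith [mul_le_mul_of_nonneg_left hE_term hα, mul_le_mul_of_nonneg_left hI_term hα]

theorem KAUFS_G_auxiliary (d k : ℕ) (Apos Aneg : Matrix (Fin d) (Fin d) ℝ)
    (B : Matrix (Fin k) (Fin k) ℝ) (α : ℝ)
    (hApos : ∀ i j, 0 ≤ Apos i j) (hAneg : ∀ i j, 0 ≤ Aneg i j)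
    (hAposSymm : Apos.transpose = Apos) (hAnegSymm : Aneg.transpose = Aneg)
    (hB : ∀ m n, 0 ≤ B m n) (hBsymm : B.transpose = B) (hα : 0 ≤ α)
    (W W' : Matrix (Fin d) (Fin k) ℝ)
    (hW : ∀ i j, 0 < W i j) (hW' : ∀ i j, 0 < W' i j) :
    KAUFS_J d k Apos Aneg B α W ≤ KAUFS_G d k Apos Aneg B α W W' :=
  KAUFS_G_auxiliary_general d k Apos Aneg B α hApos hAneg hAnegSymm hB hBsymm hα W W' hW hW'
end
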